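/- Let μ, ν be probability measures on ℝ with finite second moment with μ ≤_cx ν, and let π̂^{HF} = λ_{(0,1)}(du) δ_{F_μ^{-1}(u)}(dx) δ_{F_ν^{-1}(u)}(dy). Then for every lifted martingale coupling M̂ ∈ Π̂^M(μ,ν), ÂW₂²(M̂, π̂^{HF}) = W₂²(μ,ν) + ∫_ℝ |y|² ν(dy) − ∫_ℝ |x|² μ(dx); in particular ÂW₂(M̂, π̂^{HF}) does not depend on the choice of M̂, so every lifted martingale coupling is an ÂW₂-minimal lifted martingale rearrangement coupling of π̂^{HF}. -/

import Mathlib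

open MeasureTheory ProbabilityTheory Set Filter

noncomputable section

/-- Lebesgue measure restricted to `(0,1)`. -/
def lam01 : Measure ℝ := volume.restrict (Set.Ioo 0 1)

/-- Cumulative distribution function `F_η(x) = η((-∞, x])`. -/
def Fcdf (η : Measure ℝ) (x : ℝ) : ℝ := (η (Set.Iic x)).toReal

/-- Left limit of the cumulative distribution function, `F_η(x-) = η((-∞, x))`. -/
def FcdfL (η : Measure ℝ) (x : ℝ) : ℝ := (η (Set.Iio x)).toReal

/-- Quantile function `F_η^{-1}(u) = inf {x : F_η(x) ≥ u}`. -/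
def qf (η : Measure ℝ) (u : ℝ) : ℝ := sInf {x | u ≤ Fcdf η x}

/-- `π` is a coupling between `μ` and `ν`. -/
def IsCoupling (π : Measure (ℝ × ℝ)) (μ ν : Measure ℝ) : Prop :=
  π.map Prod.fst = μ ∧ π.map Prod.snd = ν

/-- `W_ρ^ρ(η, η')`, the Wasserstein distance of order `ρ` raised to the power `ρ`. -/
def Wr (ρ : ℝ) (η η' : Measure ℝ) : ℝ :=
  sInf {c | ∃ π : Measure (ℝ × ℝ), IsCoupling π η η' ∧ c = ∫ p, |p.1 - p.2| ^ ρ ∂π}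

/-- The Wasserstein distance of order `ρ`. -/
def W (ρ : ℝ) (η η' : Measure ℝ) : ℝ := Wr ρ η η' ^ (1 / ρ)

/-- The stochastic order `η ≤_st η'`: the quantile functions are ordered on `(0,1)`. -/
def StochOrder (η η' : Measure ℝ) : Prop := ∀ u ∈ Set.Ioo (0 : ℝ) 1, qf η u ≤ qf η' u

/-- The convex order `μ ≤_cx ν`: `∫ f dμ ≤ ∫ f dν` for every (integrable) convex `f`. -/
def ConvexOrder (μ ν : Measure ℝ) : Prop :=
  ∀ f : ℝ → ℝ, ConvexOn ℝ Set.univ f → Integrable f μ → Integrable f ν →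
    ∫ x, f x ∂μ ≤ ∫ x, f x ∂ν

/-- `AW_ρ^ρ(π, π')`, the adapted Wasserstein distance of order `ρ` raised to the power `ρ`:
the infimum over couplings `χ` between the first marginals of
`∫ (|x-x'|^ρ + W_ρ^ρ(π_x, π'_{x'})) dχ`, where `κ, κ'` are disintegration kernels of `π, π'`. -/
def AWr (ρ : ℝ) (π π' : Measure (ℝ × ℝ)) : ℝ :=
  sInf {c | ∃ (χ : Measure (ℝ × ℝ)) (κ κ' : Kernel ℝ ℝ),
      IsCoupling χ (π.map Prod.fst) (π'.map Prod.fst) ∧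
      π = (π.map Prod.fst).compProd κ ∧ π' = (π'.map Prod.fst).compProd κ' ∧
      c = ∫ q, (|q.1 - q.2| ^ ρ + Wr ρ (κ q.1) (κ' q.2)) ∂χ}

/-- The adapted Wasserstein distance of order `ρ`. -/
def AW (ρ : ℝ) (π π' : Measure (ℝ × ℝ)) : ℝ := AWr ρ π π' ^ (1 / ρ)

/-- The lifted adapted Wasserstein distance of order `ρ`, raised to the power `ρ`, between the
lifted couplings with first marginals `μ, μ'` and kernels `p, p'`. -/
def lAWr (ρ : ℝ) (μ : Measure ℝ) (p : ℝ → Measure ℝ) (μ' : Measure ℝ)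
    (p' : ℝ → Measure ℝ) : ℝ :=
  sInf {c | ∃ χ : Measure (ℝ × ℝ), IsCoupling χ lam01 lam01 ∧
      c = ∫ q, (|q.1 - q.2| ^ ρ + |qf μ q.1 - qf μ' q.2| ^ ρ + Wr ρ (p q.1) (p' q.2)) ∂χ}

/-- The probability kernel `p` encodes a lifted coupling
`λ_{(0,1)}(du) δ_{F_μ^{-1}(u)}(dx) p_u(dy)` between `μ` and `ν`. -/
def IsLiftedCoupling (μ ν : Measure ℝ) (p : ℝ → Measure ℝ) : Prop :=
  Measurable p ∧ (∀ u, IsProbabilityMeasure (p u)) ∧ lam01.bind p = ν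

/-- The probability kernel `m` encodes a lifted martingale coupling between `μ` and `ν`. -/
def IsLiftedMartingale (μ ν : Measure ℝ) (m : ℝ → Measure ℝ) : Prop :=
  IsLiftedCoupling μ ν m ∧ ∀ᵐ u ∂lam01, (∫ y, y ∂(m u)) = qf μ u

end

/-!
Fix a coupling `χ` of `λ_{(0,1)}` with itself. The martingale property `∫ y m_u(dy) = F_μ⁻¹(u)`
gives `W₂²(m_u, δ_c) = Var(m_u) + |F_μ⁻¹(u) - c|²`, and the variances integrate to
`∫ y² dν - ∫ x² dμ`. So the lifted cost of `χ` is
`∫ |u - u'|² + ∫ |F_μ⁻¹(u) - F_μ⁻¹(u')|² + (∫ y² dν - ∫ x² dμ) + ∫ |F_μ⁻¹(u) - F_ν⁻¹(u')|² dχ`.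
The first two terms vanish for the identity coupling. The last one is at least `W₂²(μ, ν)`, since
`(F_μ⁻¹ × F_ν⁻¹)_# χ` couples `μ` and `ν`, with equality for the identity coupling because the
comonotone coupling is optimal on the line. Its optimality is Hoeffding's argument: `∫ xy dπ`
increases with the joint survival function `π(X > s, Y > t)`, which is at most
`min (μ(s, ∞)) (ν(t, ∞))`, the value attained by the comonotone coupling.
-/

section Quantile

lemma bddBelow_setOf_le_cdf (η : Measure ℝ) {u : ℝ} (hu : 0 < u) :
    BddBelow {x | u ≤ cdf η x} := by
  obtain ⟨x₀, hx₀⟩ := ((tendsto_cdf_atBot η).eventually_lt_const hu).exists_forall_of_atBot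
  exact ⟨x₀, fun x hx => le_of_not_gt fun hlt => (hx₀ x hlt.le).not_ge hx⟩

lemma Fcdf_eq_cdf (η : Measure ℝ) [IsProbabilityMeasure η] : Fcdf η = cdf η :=
  funext fun x => (cdf_eq_real η x).symm

variable {η : Measure ℝ} [IsProbabilityMeasure η] {u x : ℝ}

lemma le_cdf_qf (hu : u ∈ Ioo (0 : ℝ) 1) : u ≤ cdf η (qf η u) := by
  have hne : {x | u ≤ cdf η x}.Nonempty :=
    ((tendsto_cdf_atTop η).eventually_const_le hu.2).exists
  have habove : ∀ y, qf η u < y → u ≤ cdf η y := fun y hy => by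
    rw [qf, Fcdf_eq_cdf] at hy
    obtain ⟨z, hz, hzy⟩ := exists_lt_of_csInf_lt hne hy
    exact hz.trans (monotone_cdf η hzy.le)
  exact ge_of_tendsto (((cdf η).right_continuous _).mono Ioi_subset_Ici_self)
    (eventually_nhdsWithin_of_forall habove)

lemma qf_le_iff (hu : u ∈ Ioo (0 : ℝ) 1) : qf η u ≤ x ↔ u ≤ Fcdf η x := by
  rw [Fcdf_eq_cdf]
  refine ⟨fun h => (le_cdf_qf hu).trans (monotone_cdf η h), fun h => ?_⟩
  rw [qf, Fcdf_eq_cdf]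
  exact csInf_le (bddBelow_setOf_le_cdf η hu.1) h

lemma lt_qf_iff (hu : u ∈ Ioo (0 : ℝ) 1) : x < qf η u ↔ Fcdf η x < u := by
  simpa only [not_le] using (qf_le_iff hu).not

lemma monotoneOn_qf : MonotoneOn (qf η) (Ioo 0 1) :=
  fun _ hu _ hv huv => (qf_le_iff hu).2 (huv.trans ((qf_le_iff hv).1 le_rfl))

instance : IsProbabilityMeasure lam01 :=
  ⟨by rw [lam01, Measure.restrict_apply_univ, Real.volume_Ioo]; norm_num⟩

lemma aemeasurable_qf : AEMeasurable (qf η) lam01 :=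
  aemeasurable_restrict_of_monotoneOn measurableSet_Ioo monotoneOn_qf

lemma lam01_congr {s t : Set ℝ} (h : ∀ u ∈ Ioo (0 : ℝ) 1, u ∈ s ↔ u ∈ t) : lam01 s = lam01 t := by
  rw [lam01, Measure.restrict_apply' measurableSet_Ioo, Measure.restrict_apply' measurableSet_Ioo]
  congr 1
  ext u
  exact ⟨fun hu => ⟨(h u hu.2).1 hu.1, hu.2⟩, fun hu => ⟨(h u hu.2).2 hu.1, hu.2⟩⟩

lemma lam01_Iic {a : ℝ} (ha : a ≤ 1) : lam01 (Iic a) = ENNReal.ofReal a := by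
  rw [lam01, measure_congr Iio_ae_eq_Iic.symm, Measure.restrict_apply' measurableSet_Ioo,
    Iio_inter_Ioo, Real.volume_Ioo, min_eq_left ha, sub_zero]

lemma map_qf : lam01.map (qf η) = η := by
  refine Measure.ext_of_Iic _ _ fun x => ?_
  rw [Measure.map_apply_of_aemeasurable aemeasurable_qf measurableSet_Iic,
    lam01_congr (t := Iic (Fcdf η x)) ?_, Fcdf_eq_cdf, lam01_Iic (cdf_le_one η x), ofReal_cdf]
  exact fun _ hu => qf_le_iff hu

lemma integral_comp_qf {g : ℝ → ℝ} (hg : AEStronglyMeasurable g η) :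
    ∫ u, g (qf η u) ∂lam01 = ∫ x, g x ∂η := by
  rw [← map_qf (η := η)] at hg
  rw [← integral_map aemeasurable_qf hg, map_qf]

lemma integrable_comp_qf {g : ℝ → ℝ} (hg : Integrable g η) :
    Integrable (fun u => g (qf η u)) lam01 := by
  rw [← map_qf (η := η)] at hg
  exact (integrable_map_measure hg.1 aemeasurable_qf).1 hg

end Quantile

section Coupling

variable {π : Measure (ℝ × ℝ)} {μ ν : Measure ℝ}

lemma IsCoupling.isProbabilityMeasure [IsProbabilityMeasure μ] (hπ : IsCoupling π μ ν) :
    IsProbabilityMeasure π := by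
  rw [← Measure.isProbabilityMeasure_map_iff measurable_fst.aemeasurable, hπ.1]
  infer_instance

lemma IsCoupling.ae_fst (hπ : IsCoupling π μ ν) {P : ℝ → Prop} (h : ∀ᵐ x ∂μ, P x) :
    ∀ᵐ p ∂π, P p.1 :=
  ae_of_ae_map measurable_fst.aemeasurable (hπ.1 ▸ h)

lemma IsCoupling.ae_snd (hπ : IsCoupling π μ ν) {P : ℝ → Prop} (h : ∀ᵐ y ∂ν, P y) :
    ∀ᵐ p ∂π, P p.2 :=
  ae_of_ae_map measurable_snd.aemeasurable (hπ.2 ▸ h)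

lemma IsCoupling.integrable_fst (hπ : IsCoupling π μ ν) {g : ℝ → ℝ} (hg : Integrable g μ) :
    Integrable (fun p => g p.1) π := by
  rw [← hπ.1] at hg
  exact (integrable_map_measure hg.1 measurable_fst.aemeasurable).1 hg

lemma IsCoupling.integrable_snd (hπ : IsCoupling π μ ν) {g : ℝ → ℝ} (hg : Integrable g ν) :
    Integrable (fun p => g p.2) π := by
  rw [← hπ.2] at hg
  exact (integrable_map_measure hg.1 measurable_snd.aemeasurable).1 hg

lemma IsCoupling.integral_fst (hπ : IsCoupling π μ ν) {g : ℝ → ℝ}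
    (hg : AEStronglyMeasurable g μ) : ∫ p, g p.1 ∂π = ∫ x, g x ∂μ := by
  rw [← hπ.1] at hg ⊢
  exact (integral_map measurable_fst.aemeasurable hg).symm

lemma IsCoupling.integral_snd (hπ : IsCoupling π μ ν) {g : ℝ → ℝ}
    (hg : AEStronglyMeasurable g ν) : ∫ p, g p.2 ∂π = ∫ y, g y ∂ν := by
  rw [← hπ.2] at hg ⊢
  exact (integral_map measurable_snd.aemeasurable hg).symm

lemma IsCoupling.aemeasurable_prodMap (hπ : IsCoupling π μ ν) {f g : ℝ → ℝ}
    (hf : AEMeasurable f μ) (hg : AEMeasurable g ν) : AEMeasurable (Prod.map f g) π := by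
  rw [← hπ.1] at hf
  rw [← hπ.2] at hg
  exact (hf.comp_aemeasurable measurable_fst.aemeasurable).prodMk
    (hg.comp_aemeasurable measurable_snd.aemeasurable)

lemma IsCoupling.map_prodMap (hπ : IsCoupling π μ ν) {f g : ℝ → ℝ} (hf : AEMeasurable f μ)
    (hg : AEMeasurable g ν) : IsCoupling (π.map (Prod.map f g)) (μ.map f) (ν.map g) := by
  have hfg := hπ.aemeasurable_prodMap hf hg
  rw [← hπ.1] at hf
  rw [← hπ.2] at hg
  refine ⟨?_, ?_⟩
  · rw [← hπ.1, AEMeasurable.map_map_of_aemeasurable measurable_fst.aemeasurable hfg,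
      AEMeasurable.map_map_of_aemeasurable hf measurable_fst.aemeasurable]
    rfl
  · rw [← hπ.2, AEMeasurable.map_map_of_aemeasurable measurable_snd.aemeasurable hfg,
      AEMeasurable.map_map_of_aemeasurable hg measurable_snd.aemeasurable]
    rfl

lemma IsCoupling.measure_lt_fst_and_lt_snd_le (hπ : IsCoupling π μ ν) (s t : ℝ) :
    π {p | s < p.1 ∧ t < p.2} ≤ min (μ (Ioi s)) (ν (Ioi t)) := by
  refine le_min ?_ ?_
  · rw [← hπ.1, Measure.map_apply measurable_fst measurableSet_Ioi]
    exact measure_mono fun p hp => hp.1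
  · rw [← hπ.2, Measure.map_apply measurable_snd measurableSet_Ioi]
    exact measure_mono fun p hp => hp.2

lemma isCoupling_map_diag (η : Measure ℝ) : IsCoupling (η.map fun x => (x, x)) η η := by
  have hdiag : Measurable fun x : ℝ => (x, x) := measurable_id.prodMk measurable_id
  exact ⟨by rw [Measure.map_map measurable_fst hdiag]; exact Measure.map_id,
    by rw [Measure.map_map measurable_snd hdiag]; exact Measure.map_id⟩

lemma IsCoupling.integrable_abs_mul_abs (hπ : IsCoupling π μ ν)
    (hμ2 : Integrable (fun x => x ^ 2) μ) (hν2 : Integrable (fun y => y ^ 2) ν) :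
    Integrable (fun p => |p.1| * |p.2|) π := by
  refine ((hπ.integrable_fst hμ2).add (hπ.integrable_snd hν2)).mono' (by fun_prop)
    (ae_of_all _ fun p => ?_)
  rw [Real.norm_eq_abs, abs_of_nonneg (by positivity), Pi.add_apply]
  nlinarith [sq_nonneg (|p.1| - |p.2|), sq_abs p.1, sq_abs p.2]

lemma IsCoupling.integrable_mul (hπ : IsCoupling π μ ν)
    (hμ2 : Integrable (fun x => x ^ 2) μ) (hν2 : Integrable (fun y => y ^ 2) ν) :
    Integrable (fun p => p.1 * p.2) π :=
  (hπ.integrable_abs_mul_abs hμ2 hν2).mono (by fun_prop)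
    (ae_of_all _ fun p => by simp)

lemma IsCoupling.integrable_sub_sq (hπ : IsCoupling π μ ν)
    (hμ2 : Integrable (fun x => x ^ 2) μ) (hν2 : Integrable (fun y => y ^ 2) ν) :
    Integrable (fun p => (p.1 - p.2) ^ 2) π := by
  refine (((hπ.integrable_fst hμ2).add (hπ.integrable_snd hν2)).const_mul 2).mono' (by fun_prop)
    (ae_of_all _ fun p => ?_)
  rw [Real.norm_eq_abs, abs_of_nonneg (sq_nonneg _), Pi.add_apply]
  nlinarith [sq_nonneg (p.1 + p.2)]

lemma IsCoupling.integral_sub_sq (hπ : IsCoupling π μ ν)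
    (hμ2 : Integrable (fun x => x ^ 2) μ) (hν2 : Integrable (fun y => y ^ 2) ν) :
    ∫ p, (p.1 - p.2) ^ 2 ∂π = ∫ x, x ^ 2 ∂μ + ∫ y, y ^ 2 ∂ν - 2 * ∫ p, p.1 * p.2 ∂π := by
  have h1 := hπ.integrable_fst hμ2
  have h2 := hπ.integrable_snd hν2
  have h12 := (hπ.integrable_mul hμ2 hν2).const_mul 2
  simp_rw [show ∀ p : ℝ × ℝ, (p.1 - p.2) ^ 2 = p.1 ^ 2 + p.2 ^ 2 - 2 * (p.1 * p.2) from
    fun p => by ring]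
  rw [integral_sub ?_ h12, integral_add h1 h2, integral_const_mul,
    hπ.integral_fst (g := fun x => x ^ 2) (by fun_prop),
    hπ.integral_snd (g := fun y => y ^ 2) (by fun_prop)]
  exact h1.add h2

end Coupling

section Layer

/-- Since `x = ∫ layer x s ds`, `x * y` is an integral over `(s, t)` of `1{s < x ∧ t < y}` plus
terms depending on `x` or `y` alone; integrated against a coupling, this expresses its mixed
moment through its joint survival function. -/
noncomputable def layer (x s : ℝ) : ℝ := (Ico 0 x).indicator 1 s - (Ico x 0).indicator 1 s

lemma layer_eq_ite (x s : ℝ) :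
    layer x s = (if s < x then 1 else 0) - (if s < 0 then 1 else 0) := by
  simp only [layer, indicator_apply, mem_Ico, Pi.one_apply]
  split_ifs <;> grind

lemma abs_layer (x s : ℝ) : |layer x s| = (Ico 0 x).indicator 1 s + (Ico x 0).indicator 1 s := by
  simp only [layer, indicator_apply, mem_Ico, Pi.one_apply]
  split_ifs <;> grind

lemma measurable_layer : Measurable fun p : ℝ × ℝ => layer p.1 p.2 := by
  simp only [layer_eq_ite]
  refine Measurable.sub ?_ ?_ <;> refine Measurable.ite ?_ measurable_const measurable_const
  exacts [measurableSet_lt measurable_snd measurable_fst,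
    measurableSet_lt measurable_snd measurable_const]

lemma integrable_indicator_Ico (a b : ℝ) : Integrable ((Ico a b).indicator (1 : ℝ → ℝ)) :=
  (integrable_indicator_iff measurableSet_Ico).2 (integrableOn_const measure_Ico_lt_top.ne)

lemma integrable_layer (x : ℝ) : Integrable (layer x) :=
  (integrable_indicator_Ico 0 x).sub (integrable_indicator_Ico x 0)

lemma integral_layer (x : ℝ) : ∫ s, layer x s = x := by
  unfold layer
  rw [integral_sub (integrable_indicator_Ico 0 x) (integrable_indicator_Ico x 0),
    integral_indicator_one measurableSet_Ico, integral_indicator_one measurableSet_Ico,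
    Real.volume_real_Ico, Real.volume_real_Ico, sub_zero, zero_sub, max_zero_sub_eq_self]

lemma integral_abs_layer (x : ℝ) : ∫ s, |layer x s| = |x| := by
  simp_rw [abs_layer]
  rw [integral_add (integrable_indicator_Ico 0 x) (integrable_indicator_Ico x 0),
    integral_indicator_one measurableSet_Ico, integral_indicator_one measurableSet_Ico,
    Real.volume_real_Ico, Real.volume_real_Ico, sub_zero, zero_sub,
    max_zero_add_max_neg_zero_eq_abs_self]

end Layer

section Hoeffding

open Function

lemma integrable_layer_mul_layer {θ : Measure (ℝ × ℝ)} [SFinite θ]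
    (hθ : Integrable (fun p => |p.1| * |p.2|) θ) :
    Integrable (uncurry fun p q : ℝ × ℝ => layer p.1 q.1 * layer p.2 q.2)
      (θ.prod (volume.prod volume)) := by
  have hmeas : AEStronglyMeasurable (uncurry fun p q : ℝ × ℝ => layer p.1 q.1 * layer p.2 q.2)
      (θ.prod (volume.prod volume)) :=
    ((measurable_layer.comp (measurable_fst.fst.prodMk measurable_snd.fst)).mul
      (measurable_layer.comp (measurable_fst.snd.prodMk measurable_snd.snd))).aestronglyMeasurable
  refine (integrable_prod_iff hmeas).2
    ⟨ae_of_all _ fun p => (integrable_layer p.1).mul_prod (integrable_layer p.2), ?_⟩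
  refine hθ.congr (ae_of_all _ fun p => ?_)
  simp only [uncurry_apply_pair, norm_mul, Real.norm_eq_abs]
  rw [integral_prod_mul (fun s => |layer p.1 s|) (fun t => |layer p.2 t|), integral_abs_layer,
    integral_abs_layer]

lemma integral_mul_eq_integral_layer {θ : Measure (ℝ × ℝ)} [SFinite θ]
    (hθ : Integrable (fun p => |p.1| * |p.2|) θ) :
    ∫ p, p.1 * p.2 ∂θ =
      ∫ q, (∫ p, layer p.1 q.1 * layer p.2 q.2 ∂θ) ∂(volume.prod volume) := by
  rw [← integral_integral_swap (integrable_layer_mul_layer hθ)]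
  refine integral_congr_ae (ae_of_all _ fun p => ?_)
  dsimp only
  rw [integral_prod_mul (fun s => layer p.1 s) (fun t => layer p.2 t), integral_layer,
    integral_layer]

variable {π π' : Measure (ℝ × ℝ)} {μ ν : Measure ℝ} [IsProbabilityMeasure μ]
  [IsProbabilityMeasure ν]

lemma measurableSet_lt_fst_and_lt_snd (s t : ℝ) :
    MeasurableSet {p : ℝ × ℝ | s < p.1 ∧ t < p.2} :=
  (measurableSet_lt measurable_const measurable_fst).inter
    (measurableSet_lt measurable_const measurable_snd)

lemma integral_layer_mul_layer (hπ : IsCoupling π μ ν) (s t : ℝ) :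
    ∫ p, layer p.1 s * layer p.2 t ∂π =
      π.real {p | s < p.1 ∧ t < p.2} - (if t < 0 then 1 else 0) * μ.real (Ioi s)
        - (if s < 0 then 1 else 0) * ν.real (Ioi t)
        + (if s < 0 then 1 else 0) * (if t < 0 then 1 else 0) := by
  have := hπ.isProbabilityMeasure
  set a : ℝ := if s < 0 then 1 else 0
  set b : ℝ := if t < 0 then 1 else 0
  have hA := measurableSet_lt_fst_and_lt_snd s t
  have hiA := (integrable_const (1 : ℝ)).indicator hA (μ := π)
  have hi1 :=
    hπ.integrable_fst ((integrable_const (1 : ℝ)).indicator measurableSet_Ioi (s := Ioi s))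
  have hi2 :=
    hπ.integrable_snd ((integrable_const (1 : ℝ)).indicator measurableSet_Ioi (s := Ioi t))
  have hpt : (fun p : ℝ × ℝ => layer p.1 s * layer p.2 t) = fun p =>
      {p : ℝ × ℝ | s < p.1 ∧ t < p.2}.indicator (fun _ => (1 : ℝ)) p
        - b * (Ioi s).indicator (fun _ => (1 : ℝ)) p.1
        - a * (Ioi t).indicator (fun _ => (1 : ℝ)) p.2 + a * b := by
    funext p
    simp only [layer_eq_ite, indicator_apply, mem_Ioi, a, b]
    split_ifs <;> grind
  rw [hpt, integral_add ?_ (integrable_const _), integral_sub ?_ (hi2.const_mul a),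
    integral_sub hiA (hi1.const_mul b), integral_const_mul, integral_const_mul,
    hπ.integral_fst (measurable_const.indicator measurableSet_Ioi).aestronglyMeasurable,
    hπ.integral_snd (measurable_const.indicator measurableSet_Ioi).aestronglyMeasurable,
    integral_indicator_const _ hA, integral_indicator_const _ measurableSet_Ioi,
    integral_indicator_const _ measurableSet_Ioi, integral_const]
  · simp
  exacts [hiA.sub (hi1.const_mul b), (hiA.sub (hi1.const_mul b)).sub (hi2.const_mul a)]

lemma integral_mul_le_of_forall_measure_le (hπ : IsCoupling π μ ν) (hπ' : IsCoupling π' μ ν)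
    (hμ2 : Integrable (fun x => x ^ 2) μ) (hν2 : Integrable (fun y => y ^ 2) ν)
    (hle : ∀ s t, π {p | s < p.1 ∧ t < p.2} ≤ π' {p | s < p.1 ∧ t < p.2}) :
    ∫ p, p.1 * p.2 ∂π ≤ ∫ p, p.1 * p.2 ∂π' := by
  have := hπ.isProbabilityMeasure
  have := hπ'.isProbabilityMeasure
  have hi := hπ.integrable_abs_mul_abs hμ2 hν2
  have hi' := hπ'.integrable_abs_mul_abs hμ2 hν2
  rw [integral_mul_eq_integral_layer hi, integral_mul_eq_integral_layer hi']
  refine integral_mono (integrable_layer_mul_layer hi).swap.integral_prod_left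
    (integrable_layer_mul_layer hi').swap.integral_prod_left fun q => ?_
  rw [integral_layer_mul_layer hπ, integral_layer_mul_layer hπ']
  have := ENNReal.toReal_mono (measure_ne_top π' _) (hle q.1 q.2)
  simp only [measureReal_def]
  linarith

variable (μ ν) in
noncomputable def comonotoneCoupling : Measure (ℝ × ℝ) := lam01.map fun u => (qf μ u, qf ν u)

lemma aemeasurable_qf_qf : AEMeasurable (fun u => (qf μ u, qf ν u)) lam01 :=
  aemeasurable_qf.prodMk aemeasurable_qf

variable (μ ν) in
lemma isCoupling_comonotoneCoupling : IsCoupling (comonotoneCoupling μ ν) μ ν :=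
  ⟨by rw [comonotoneCoupling, AEMeasurable.map_map_of_aemeasurable measurable_fst.aemeasurable
      aemeasurable_qf_qf]; exact map_qf,
    by rw [comonotoneCoupling, AEMeasurable.map_map_of_aemeasurable measurable_snd.aemeasurable
      aemeasurable_qf_qf]; exact map_qf⟩

lemma measure_Ioi_eq_lam01 (η : Measure ℝ) [IsProbabilityMeasure η] (s : ℝ) :
    η (Ioi s) = lam01 (Ioi (Fcdf η s)) := by
  rw [← map_qf (η := η), Measure.map_apply_of_aemeasurable aemeasurable_qf measurableSet_Ioi,
    map_qf]
  exact lam01_congr fun _ hu => lt_qf_iff hu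

lemma comonotoneCoupling_lt_fst_and_lt_snd (s t : ℝ) :
    comonotoneCoupling μ ν {p | s < p.1 ∧ t < p.2} = min (μ (Ioi s)) (ν (Ioi t)) := by
  have hanti : Antitone fun a => lam01 (Ioi a) := fun _ _ hab => measure_mono (Ioi_subset_Ioi hab)
  rw [comonotoneCoupling, Measure.map_apply_of_aemeasurable aemeasurable_qf_qf
      (measurableSet_lt_fst_and_lt_snd s t),
    lam01_congr (t := Ioi (Fcdf μ s) ∩ Ioi (Fcdf ν t)) ?_, Ioi_inter_Ioi, hanti.map_max,
    measure_Ioi_eq_lam01 μ s, measure_Ioi_eq_lam01 ν t]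
  exact fun u hu => and_congr (lt_qf_iff (η := μ) hu) (lt_qf_iff (η := ν) hu)

lemma IsCoupling.integral_mul_le_comonotoneCoupling (hπ : IsCoupling π μ ν)
    (hμ2 : Integrable (fun x => x ^ 2) μ) (hν2 : Integrable (fun y => y ^ 2) ν) :
    ∫ p, p.1 * p.2 ∂π ≤ ∫ p, p.1 * p.2 ∂comonotoneCoupling μ ν :=
  integral_mul_le_of_forall_measure_le hπ (isCoupling_comonotoneCoupling μ ν) hμ2 hν2 fun s t => by
    rw [comonotoneCoupling_lt_fst_and_lt_snd]
    exact hπ.measure_lt_fst_and_lt_snd_le s t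

end Hoeffding

section Wasserstein

lemma Wr_two_eq_sInf (μ ν : Measure ℝ) :
    Wr 2 μ ν = sInf {c | ∃ π, IsCoupling π μ ν ∧ c = ∫ p, (p.1 - p.2) ^ 2 ∂π} := by
  simp only [Wr, Real.rpow_two, sq_abs]

lemma Wr_two_le {π : Measure (ℝ × ℝ)} {μ ν : Measure ℝ} (hπ : IsCoupling π μ ν) :
    Wr 2 μ ν ≤ ∫ p, (p.1 - p.2) ^ 2 ∂π := by
  rw [Wr_two_eq_sInf]
  exact csInf_le ⟨0, by rintro _ ⟨π, -, rfl⟩; positivity⟩ ⟨π, hπ, rfl⟩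

variable {π χ : Measure (ℝ × ℝ)} {μ ν : Measure ℝ} [IsProbabilityMeasure μ]
  [IsProbabilityMeasure ν]

lemma Wr_two_eq_integral_qf (hμ2 : Integrable (fun x => x ^ 2) μ)
    (hν2 : Integrable (fun y => y ^ 2) ν) :
    Wr 2 μ ν = ∫ u, (qf μ u - qf ν u) ^ 2 ∂lam01 := by
  have hcom := isCoupling_comonotoneCoupling μ ν
  have hleast : IsLeast {c | ∃ π, IsCoupling π μ ν ∧ c = ∫ p, (p.1 - p.2) ^ 2 ∂π}
      (∫ p, (p.1 - p.2) ^ 2 ∂comonotoneCoupling μ ν) := by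
    refine ⟨⟨_, hcom, rfl⟩, ?_⟩
    rintro _ ⟨π, hπ, rfl⟩
    rw [hπ.integral_sub_sq hμ2 hν2, hcom.integral_sub_sq hμ2 hν2]
    linarith [hπ.integral_mul_le_comonotoneCoupling hμ2 hν2]
  rw [Wr_two_eq_sInf, hleast.csInf_eq, comonotoneCoupling,
    integral_map aemeasurable_qf_qf (by fun_prop)]

lemma IsCoupling.map_qf (hχ : IsCoupling χ lam01 lam01) :
    IsCoupling (χ.map (Prod.map (qf μ) (qf ν))) μ ν := by
  simpa only [_root_.map_qf] using
    hχ.map_prodMap (aemeasurable_qf (η := μ)) (aemeasurable_qf (η := ν))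

lemma IsCoupling.integral_qf_sub_sq (hχ : IsCoupling χ lam01 lam01) :
    ∫ q, (qf μ q.1 - qf ν q.2) ^ 2 ∂χ =
      ∫ p, (p.1 - p.2) ^ 2 ∂(χ.map (Prod.map (qf μ) (qf ν))) :=
  (integral_map (hχ.aemeasurable_prodMap aemeasurable_qf aemeasurable_qf)
    (by fun_prop : Continuous fun p : ℝ × ℝ => (p.1 - p.2) ^ 2).aestronglyMeasurable).symm

lemma IsCoupling.integrable_qf_sub_sq (hχ : IsCoupling χ lam01 lam01)
    (hμ2 : Integrable (fun x => x ^ 2) μ) (hν2 : Integrable (fun y => y ^ 2) ν) :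
    Integrable (fun q => (qf μ q.1 - qf ν q.2) ^ 2) χ :=
  (integrable_map_measure
    (by fun_prop : Continuous fun p : ℝ × ℝ => (p.1 - p.2) ^ 2).aestronglyMeasurable
    (hχ.aemeasurable_prodMap aemeasurable_qf aemeasurable_qf)).1
    (hχ.map_qf.integrable_sub_sq hμ2 hν2)

lemma IsCoupling.Wr_two_le_integral_qf_sub_sq (hχ : IsCoupling χ lam01 lam01) :
    Wr 2 μ ν ≤ ∫ q, (qf μ q.1 - qf ν q.2) ^ 2 ∂χ := by
  rw [hχ.integral_qf_sub_sq]
  exact Wr_two_le hχ.map_qf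

lemma integral_sub_const_sq {θ : Measure ℝ} [IsProbabilityMeasure θ]
    (h2 : Integrable (fun y => y ^ 2) θ) (c : ℝ) :
    ∫ y, (y - c) ^ 2 ∂θ = (∫ y, y ^ 2 ∂θ - (∫ y, y ∂θ) ^ 2) + (∫ y, y ∂θ - c) ^ 2 := by
  have h1 : Integrable (fun y => y) θ :=
    ((memLp_two_iff_integrable_sq aestronglyMeasurable_id).2 h2).integrable one_le_two
  simp_rw [show ∀ y : ℝ, (y - c) ^ 2 = y ^ 2 - 2 * c * y + c ^ 2 from fun y => by ring]
  rw [integral_add ?_ (integrable_const _), integral_sub h2 (h1.const_mul _), integral_const_mul,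
    integral_const]
  · simp only [probReal_univ, one_smul]
    ring
  · exact h2.sub (h1.const_mul _)

lemma Wr_dirac (ρ : ℝ) (θ : Measure ℝ) [IsProbabilityMeasure θ] (c : ℝ) :
    Wr ρ θ (Measure.dirac c) = ∫ y, |y - c| ^ ρ ∂θ := by
  have hcost : ∀ π, IsCoupling π θ (Measure.dirac c) →
      ∫ p, |p.1 - p.2| ^ ρ ∂π = ∫ y, |y - c| ^ ρ ∂θ := by
    intro π hπ
    have hsnd : ∀ᵐ p ∂π, p.2 = c :=
      hπ.ae_snd (P := (· = c)) (by rw [ae_dirac_eq]; exact eventually_pure.2 rfl)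
    rw [integral_congr_ae (hsnd.mono fun p hp => by rw [hp])]
    exact hπ.integral_fst (g := fun y => |y - c| ^ ρ)
      (by fun_prop : Measurable fun y : ℝ => |y - c| ^ ρ).aestronglyMeasurable
  have hprod : IsCoupling (θ.prod (Measure.dirac c)) θ (Measure.dirac c) :=
    ⟨by simp [Measure.map_fst_prod], by simp [Measure.map_snd_prod]⟩
  have hS : {d | ∃ π, IsCoupling π θ (Measure.dirac c) ∧ d = ∫ p, |p.1 - p.2| ^ ρ ∂π} =
      {∫ y, |y - c| ^ ρ ∂θ} := by
    refine eq_singleton_iff_unique_mem.2 ⟨⟨_, hprod, (hcost _ hprod).symm⟩, ?_⟩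
    rintro _ ⟨π, hπ, rfl⟩
    exact hcost π hπ
  rw [Wr, hS, csInf_singleton]

lemma Wr_two_dirac_of_integral_eq {θ : Measure ℝ} [IsProbabilityMeasure θ]
    (h2 : Integrable (fun y => y ^ 2) θ) {x : ℝ} (hx : ∫ y, y ∂θ = x) (c : ℝ) :
    Wr 2 θ (Measure.dirac c) = (∫ y, y ^ 2 ∂θ - x ^ 2) + (x - c) ^ 2 := by
  rw [Wr_dirac, ← hx, ← integral_sub_const_sq h2]
  simp only [Real.rpow_two, sq_abs]

end Wasserstein

section LiftedCoupling

variable {μ ν : Measure ℝ} {p : ℝ → Measure ℝ} {g : ℝ → ℝ}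

lemma IsLiftedCoupling.ae_integrable (hp : IsLiftedCoupling μ ν p) (hg : Integrable g ν) :
    ∀ᵐ u ∂lam01, Integrable g (p u) := by
  have hν : (⟨p, hp.1⟩ : Kernel ℝ ℝ) ∘ₘ lam01 = ν := hp.2.2
  rw [← hν] at hg
  exact Measure.ae_integrable_of_integrable_comp hg

lemma IsLiftedCoupling.integrable_integral (hp : IsLiftedCoupling μ ν p) (hg : Integrable g ν) :
    Integrable (fun u => ∫ y, g y ∂p u) lam01 := by
  have hν : (⟨p, hp.1⟩ : Kernel ℝ ℝ) ∘ₘ lam01 = ν := hp.2.2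
  rw [← hν, Measure.comp_eq_comp_const_apply] at hg
  simpa using hg.integral_comp

lemma IsLiftedCoupling.integral_integral (hp : IsLiftedCoupling μ ν p) (hg : Integrable g ν) :
    ∫ u, ∫ y, g y ∂p u ∂lam01 = ∫ y, g y ∂ν := by
  have hν : (⟨p, hp.1⟩ : Kernel ℝ ℝ) ∘ₘ lam01 = ν := hp.2.2
  rw [← hν, Measure.comp_eq_comp_const_apply] at hg ⊢
  rw [Kernel.integral_comp hg]
  simp

end LiftedCoupling

lemma integrable_sq_lam01 : Integrable (fun u : ℝ => u ^ 2) lam01 :=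
  ((continuous_pow 2).integrableOn_Icc (a := 0) (b := 1)).mono_set Ioo_subset_Icc_self

section LiftedCost

variable {μ ν : Measure ℝ} [IsProbabilityMeasure μ] [IsProbabilityMeasure ν]
  {m : ℝ → Measure ℝ} {χ : Measure (ℝ × ℝ)}

lemma IsLiftedMartingale.integral_cost_dirac_qf (hm : IsLiftedMartingale μ ν m)
    (hμ2 : Integrable (fun x => x ^ 2) μ) (hν2 : Integrable (fun y => y ^ 2) ν)
    (hχ : IsCoupling χ lam01 lam01) :
    ∫ q, (|q.1 - q.2| ^ (2 : ℝ) + |qf μ q.1 - qf μ q.2| ^ (2 : ℝ)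
        + Wr 2 (m q.1) (Measure.dirac (qf ν q.2))) ∂χ =
      ∫ q, (q.1 - q.2) ^ 2 ∂χ + ∫ q, (qf μ q.1 - qf μ q.2) ^ 2 ∂χ
        + (∫ y, y ^ 2 ∂ν - ∫ x, x ^ 2 ∂μ) + ∫ q, (qf μ q.1 - qf ν q.2) ^ 2 ∂χ := by
  set V : ℝ → ℝ := fun u => ∫ y, y ^ 2 ∂m u - qf μ u ^ 2
  have hV : Integrable V lam01 := (hm.1.integrable_integral hν2).sub (integrable_comp_qf hμ2)
  have hintV : ∫ u, V u ∂lam01 = ∫ y, y ^ 2 ∂ν - ∫ x, x ^ 2 ∂μ := by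
    rw [integral_sub (hm.1.integrable_integral hν2) (integrable_comp_qf hμ2),
      hm.1.integral_integral hν2, integral_comp_qf (g := fun x => x ^ 2) (by fun_prop)]
  have hWr : ∀ᵐ u ∂lam01, ∀ c, Wr 2 (m u) (Measure.dirac c) = V u + (qf μ u - c) ^ 2 := by
    filter_upwards [hm.1.ae_integrable hν2, hm.2] with u h2 hmean c
    have := hm.1.2.1 u
    exact Wr_two_dirac_of_integral_eq h2 hmean c
  have h1 := hχ.integrable_sub_sq integrable_sq_lam01 integrable_sq_lam01
  have h2 := hχ.integrable_qf_sub_sq hμ2 hμ2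
  have h3 := hχ.integrable_fst hV
  have h4 := hχ.integrable_qf_sub_sq hμ2 hν2
  rw [integral_congr_ae ((hχ.ae_fst hWr).mono fun q hq => by
      rw [hq, Real.rpow_two, Real.rpow_two, sq_abs, sq_abs]),
    integral_add ?_ ?_, integral_add h1 h2, integral_add h3 h4, hχ.integral_fst hV.1, hintV]
  · ring
  exacts [h1.add h2, h3.add h4]

lemma IsLiftedMartingale.lAWr_two_dirac_qf (hm : IsLiftedMartingale μ ν m)
    (hμ2 : Integrable (fun x => x ^ 2) μ) (hν2 : Integrable (fun y => y ^ 2) ν) :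
    lAWr 2 μ m μ (fun u => Measure.dirac (qf ν u)) =
      Wr 2 μ ν + ∫ y, y ^ 2 ∂ν - ∫ x, x ^ 2 ∂μ := by
  have hdiag := isCoupling_map_diag lam01
  have hmeas : Measurable fun u : ℝ => (u, u) := measurable_id.prodMk measurable_id
  refine IsLeast.csInf_eq ⟨⟨_, hdiag, ?_⟩, ?_⟩
  · rw [hm.integral_cost_dirac_qf hμ2 hν2 hdiag, integral_map hmeas.aemeasurable (by fun_prop),
      integral_map hmeas.aemeasurable (hdiag.integrable_qf_sub_sq hμ2 hμ2).1,
      integral_map hmeas.aemeasurable (hdiag.integrable_qf_sub_sq hμ2 hν2).1,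
      Wr_two_eq_integral_qf hμ2 hν2]
    simp only [sub_self, zero_pow two_ne_zero, integral_zero, zero_add]
    ring
  · rintro _ ⟨χ, hχ, rfl⟩
    rw [hm.integral_cost_dirac_qf hμ2 hν2 hχ]
    have h1 : 0 ≤ ∫ q, (q.1 - q.2) ^ 2 ∂χ := integral_nonneg fun _ => sq_nonneg _
    have h2 : 0 ≤ ∫ q, (qf μ q.1 - qf μ q.2) ^ 2 ∂χ := integral_nonneg fun _ => sq_nonneg _
    linarith [hχ.Wr_two_le_integral_qf_sub_sq (μ := μ) (ν := ν)]

end LiftedCost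

theorem stmt10_general
    (μ ν : Measure ℝ) [IsProbabilityMeasure μ] [IsProbabilityMeasure ν]
    (hμ2 : Integrable (fun x => |x| ^ 2) μ) (hν2 : Integrable (fun x => |x| ^ 2) ν)
    (m : ℝ → Measure ℝ) (hm : IsLiftedMartingale μ ν m) :
    lAWr 2 μ m μ (fun u => Measure.dirac (qf ν u)) =
      Wr 2 μ ν + (∫ y, |y| ^ 2 ∂ν) - ∫ x, |x| ^ 2 ∂μ ∧
    (∀ m' : ℝ → Measure ℝ, IsLiftedMartingale μ ν m' →
      lAWr 2 μ m μ (fun u => Measure.dirac (qf ν u)) =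
        lAWr 2 μ m' μ (fun u => Measure.dirac (qf ν u))) := by
  simp only [sq_abs] at hμ2 hν2 ⊢
  exact ⟨hm.lAWr_two_dirac_qf hμ2 hν2, fun m' hm' =>
    (hm.lAWr_two_dirac_qf hμ2 hν2).trans (hm'.lAWr_two_dirac_qf hμ2 hν2).symm⟩

/-- Proposition `liftedQuadraticMarReag`: for `μ ≤_cx ν` with finite second
moments, every lifted martingale coupling `M̂` between `μ` and `ν` satisfies
`ÂW₂²(M̂, π̂^{HF}) = W₂²(μ,ν) + ∫ |y|² ν(dy) - ∫ |x|² μ(dx)`; in particular this value does not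
depend on `M̂`, so every lifted martingale coupling is an `ÂW₂`-minimal lifted martingale
rearrangement coupling of `π̂^{HF}`. -/
theorem stmt10
    (μ ν : Measure ℝ) [IsProbabilityMeasure μ] [IsProbabilityMeasure ν]
    (hμ2 : Integrable (fun x => |x| ^ 2) μ) (hν2 : Integrable (fun x => |x| ^ 2) ν)
    (hcx : ConvexOrder μ ν)
    (m : ℝ → Measure ℝ) (hm : IsLiftedMartingale μ ν m) :
    lAWr 2 μ m μ (fun u => Measure.dirac (qf ν u)) =
      Wr 2 μ ν + (∫ y, |y| ^ 2 ∂ν) - ∫ x, |x| ^ 2 ∂μ ∧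
    (∀ m' : ℝ → Measure ℝ, IsLiftedMartingale μ ν m' →
      lAWr 2 μ m μ (fun u => Measure.dirac (qf ν u)) =
        lAWr 2 μ m' μ (fun u => Measure.dirac (qf ν u))) :=
  stmt10_general μ ν hμ2 hν2 m hm
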